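/- For every integer n ≥ 2, the type B descent polynomials over signed permutations whose first letter is n, respectively -n, satisfy B_{n,n}(t) = B_{n,-n}(t) = 2^{n-1} · t · A_{n-1}(t), where A_{n-1}(t) is the Eulerian polynomial of 𝔖_{n-1}. -/

import Mathlib

open Finset Polynomial

/-- A signed permutation in the hyperoctahedral group `𝔅_n` is modelled by a permutation of
`Fin n` together with a sign vector.  `sval p i` is the value `π_i = π(i)` of the associated
bijection of `{-n,…,-1,1,…,n}` (with `π(-i) = -π(i)` and the convention `π_0 = 0`). -/
def sval {n : ℕ} (p : Equiv.Perm (Fin n) × (Fin n → Bool)) (i : ℤ) : ℤ :=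
  if h : 1 ≤ i ∧ i ≤ (n : ℤ) then
    (if p.2 ⟨(i - 1).toNat, by omega⟩ then -1 else 1) *
      (((p.1 ⟨(i - 1).toNat, by omega⟩ : Fin n) : ℕ) + 1)
  else if h' : 1 ≤ -i ∧ -i ≤ (n : ℤ) then
    -((if p.2 ⟨(-i - 1).toNat, by omega⟩ then -1 else 1) *
      (((p.1 ⟨(-i - 1).toNat, by omega⟩ : Fin n) : ℕ) + 1))
  else 0

/-- The type B descent number `des_B(π) = |{i ∈ {0,…,n-1} : π_i > π_{i+1}}|` (with `π_0 = 0`). -/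
def desB {n : ℕ} (p : Equiv.Perm (Fin n) × (Fin n → Bool)) : ℕ :=
  (Finset.univ.filter (fun i : Fin n =>
    sval p (((i : ℕ) : ℤ) + 1) < sval p ((i : ℕ) : ℤ))).card

/-- The type B excedance number
`exc_B(π) = |{i ∈ [n] : π(|π(i)|) > π(i) or π(i) = -i}|`. -/
def excB {n : ℕ} (p : Equiv.Perm (Fin n) × (Fin n → Bool)) : ℕ :=
  (Finset.univ.filter (fun i : Fin n =>
    sval p (((i : ℕ) : ℤ) + 1) < sval p |sval p (((i : ℕ) : ℤ) + 1)| ∨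
      sval p (((i : ℕ) : ℤ) + 1) = -(((i : ℕ) : ℤ) + 1))).card

/-- The restricted type B Eulerian polynomial `B_{n,k}(t) = ∑_{π ∈ 𝔅_n, π_1 = k} t^{des_B(π)}`. -/
noncomputable def Bpoly (n : ℕ) (k : ℤ) : Polynomial ℚ :=
  ∑ p ∈ Finset.univ.filter
      (fun p : Equiv.Perm (Fin n) × (Fin n → Bool) => sval p 1 = k),
    Polynomial.X ^ desB p

/-- `BE_{n,k}(t) = ∑_{π ∈ 𝔅_n, π_1 = k} t^{exc_B(π)}`. -/
noncomputable def BEpoly (n : ℕ) (k : ℤ) : Polynomial ℚ :=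
  ∑ p ∈ Finset.univ.filter
      (fun p : Equiv.Perm (Fin n) × (Fin n → Bool) => sval p 1 = k),
    Polynomial.X ^ excB p

/-- Number of descents of an (ordinary) permutation of `Fin m`. -/
def desNum {m : ℕ} (π : Equiv.Perm (Fin m)) : ℕ :=
  (Finset.univ.filter (fun i : Fin (m - 1) =>
    π ⟨(i : ℕ) + 1, by have := i.isLt; omega⟩ < π ⟨(i : ℕ), by have := i.isLt; omega⟩)).card

/-- The Eulerian polynomial `A_m(t) = ∑_{π ∈ 𝔖_m} t^{des(π)}`. -/
noncomputable def eulerianPoly (m : ℕ) : Polynomial ℚ :=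
  ∑ π : Equiv.Perm (Fin m), Polynomial.X ^ desNum π


lemma sval_zero {n : ℕ} (p : Equiv.Perm (Fin n) × (Fin n → Bool)) : sval p 0 = 0 := by
  rw [sval, dif_neg (by omega), dif_neg (by omega)]

lemma sval_coe {n : ℕ} (p : Equiv.Perm (Fin n) × (Fin n → Bool)) (j : Fin n) :
    sval p (((j : ℕ) : ℤ) + 1) = (if p.2 j then -1 else 1) * (((p.1 j : Fin n) : ℕ) + 1) := by
  have hj := j.isLt
  rw [sval, dif_pos (by omega)]
  simp [Fin.eta]

variable {m : ℕ}

def rmap (δ : Fin (m+1) → Bool) (v : Fin (m+1)) : ℤ :=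
  if δ v then -(((v : ℕ) : ℤ) + 1) else ((v : ℕ) : ℤ) + 1

lemma abs_rmap (δ : Fin (m+1) → Bool) (v : Fin (m+1)) : |rmap δ v| = ((v : ℕ) : ℤ) + 1 := by
  rw [rmap]; split
  · rw [abs_neg, abs_of_nonneg (by positivity)]
  · rw [abs_of_nonneg (by positivity)]

lemma rmap_injective (δ : Fin (m+1) → Bool) : Function.Injective (rmap δ) := by
  intro u v h
  have h2 := congrArg abs h
  rw [abs_rmap, abs_rmap] at h2
  exact Fin.ext (by exact_mod_cast add_right_cancel h2)

lemma rmap_neg_iff (δ : Fin (m+1) → Bool) (v : Fin (m+1)) : rmap δ v < 0 ↔ δ v = true := by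
  rw [rmap]; split <;> simp_all <;> omega

lemma rmap_abs_le (δ : Fin (m+1) → Bool) (v : Fin (m+1)) : |rmap δ v| ≤ (m : ℤ) + 1 := by
  rw [abs_rmap]; have := v.isLt; omega

def sSet (δ : Fin (m+1) → Bool) : Finset ℤ := univ.image (rmap δ)

lemma card_sSet (δ : Fin (m+1) → Bool) : (sSet δ).card = m + 1 := by
  rw [sSet, Finset.card_image_of_injective _ (rmap_injective δ), card_univ, Fintype.card_fin]

noncomputable def gIso (δ : Fin (m+1) → Bool) : Fin (m+1) ≃o {x // x ∈ sSet δ} :=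
  (sSet δ).orderIsoOfFin (card_sSet δ)

noncomputable def g (δ : Fin (m+1) → Bool) (k : Fin (m+1)) : ℤ := (gIso δ k : ℤ)

lemma g_strictMono (δ : Fin (m+1) → Bool) : StrictMono (g δ) := by
  intro a b hab
  exact_mod_cast (gIso δ).strictMono hab

lemma g_mem (δ : Fin (m+1) → Bool) (k : Fin (m+1)) : g δ k ∈ sSet δ := (gIso δ k).2

noncomputable def rEquiv (δ : Fin (m+1) → Bool) : Fin (m+1) ≃ {x // x ∈ sSet δ} :=
  Equiv.ofBijective (fun v => ⟨rmap δ v, mem_image_of_mem _ (mem_univ v)⟩)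
    ((Fintype.bijective_iff_injective_and_card _).2
      ⟨fun u v h => rmap_injective δ (congrArg Subtype.val h),
        by rw [Fintype.card_fin, Fintype.card_coe, card_sSet]⟩)

noncomputable def valEquiv (δ : Fin (m+1) → Bool) : Equiv.Perm (Fin (m+1)) :=
  (gIso δ).toEquiv.trans (rEquiv δ).symm

lemma rmap_valEquiv (δ : Fin (m+1) → Bool) (k : Fin (m+1)) :
    rmap δ (valEquiv δ k) = g δ k := by
  have := (rEquiv δ).apply_symm_apply ((gIso δ).toEquiv k)
  have h2 := congrArg Subtype.val this
  exact h2

lemma coe_valEquiv (δ : Fin (m+1) → Bool) (k : Fin (m+1)) :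
    (((valEquiv δ k : Fin (m+1)) : ℕ) : ℤ) + 1 = |g δ k| := by
  rw [← rmap_valEquiv δ k, abs_rmap]

lemma g_neg_iff (δ : Fin (m+1) → Bool) (k : Fin (m+1)) :
    g δ k < 0 ↔ δ (valEquiv δ k) = true := by
  rw [← rmap_valEquiv δ k, rmap_neg_iff]

lemma abs_g_le (δ : Fin (m+1) → Bool) (k : Fin (m+1)) : |g δ k| ≤ (m : ℤ) + 1 := by
  rw [← rmap_valEquiv δ k]; exact rmap_abs_le δ _

variable {m : ℕ}

def embed (u : Equiv.Perm (Fin (m+1))) : Equiv.Perm (Fin (m+2)) :=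
  ((finSuccEquiv (m+1)).trans u.optionCongr).trans (finSuccEquiv' (Fin.last (m+1))).symm

lemma embed_zero (u : Equiv.Perm (Fin (m+1))) : embed u 0 = Fin.last (m+1) := by
  simp [embed]

lemma embed_succ (u : Equiv.Perm (Fin (m+1))) (k : Fin (m+1)) :
    embed u k.succ = (u k).castSucc := by
  simp [embed, finSuccEquiv'_symm_some, Fin.succAbove_last]

noncomputable def Phi (b : Bool) (q : (Fin (m+1) → Bool) × Equiv.Perm (Fin (m+1))) :
    Equiv.Perm (Fin (m+2)) × (Fin (m+2) → Bool) :=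
  (embed (q.2.trans (valEquiv q.1)), Fin.cons b fun k => decide (g q.1 (q.2 k) < 0))

lemma sval_Phi_one (b : Bool) (q : (Fin (m+1) → Bool) × Equiv.Perm (Fin (m+1))) :
    sval (Phi b q) 1 = if b then -((m : ℤ)+2) else (m : ℤ)+2 := by
  have h := sval_coe (Phi b q) 0
  simp only [Fin.val_zero, Nat.cast_zero, zero_add] at h
  rw [h]
  simp only [Phi, Fin.cons_zero, embed_zero, Fin.val_last]
  cases b <;> push_cast <;> norm_num <;> ring

lemma sval_Phi_succ (b : Bool) (q : (Fin (m+1) → Bool) × Equiv.Perm (Fin (m+1)))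
    (k : Fin (m+1)) : sval (Phi b q) (((k : ℕ) : ℤ) + 2) = g q.1 (q.2 k) := by
  have h := sval_coe (Phi b q) k.succ
  rw [Fin.val_succ] at h
  push_cast at h
  rw [show ((k : ℕ) : ℤ) + 2 = ((k : ℕ) : ℤ) + 1 + 1 by ring, h]
  simp only [Phi, Fin.cons_succ, embed_succ, Fin.coe_castSucc]
  have hv := coe_valEquiv q.1 (q.2 k)
  rcases lt_or_ge (g q.1 (q.2 k)) 0 with hg | hg
  · rw [if_pos (by simpa using hg)]
    rw [abs_of_neg hg] at hv
    simp only [Equiv.trans_apply] at *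
    omega
  · rw [if_neg (by simpa using not_lt.2 hg)]
    rw [abs_of_nonneg hg] at hv
    simp only [Equiv.trans_apply] at *
    omega

lemma desNum_eq (τ : Equiv.Perm (Fin (m+1))) :
    desNum τ = ∑ k : Fin m, if τ k.succ < τ k.castSucc then 1 else 0 := by
  rw [desNum, card_filter]
  rfl

lemma desB_Phi (b : Bool) (q : (Fin (m+1) → Bool) × Equiv.Perm (Fin (m+1))) :
    desB (Phi b q) = desNum q.2 + 1 := by
  rw [desB, card_filter, Fin.sum_univ_succ, Fin.sum_univ_succ, desNum_eq]
  simp only [Fin.val_succ, Fin.val_zero, Nat.cast_add, Nat.cast_zero, Nat.cast_one, zero_add]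
  have h0 := sval_zero (Phi b q)
  have h1 := sval_Phi_one b q
  have hsucc : ∀ k : Fin (m+1), sval (Phi b q) (((k:ℕ):ℤ)+1+1) = g q.1 (q.2 k) := fun k => by
    rw [show ((k:ℕ):ℤ)+1+1 = ((k:ℕ):ℤ)+2 by ring]; exact sval_Phi_succ b q k
  have h2 : sval (Phi b q) (1+1) = g q.1 (q.2 0) := by
    have := hsucc 0
    simpa using this
  have h3 : ∀ x : Fin m, sval (Phi b q) (((x:ℕ):ℤ)+1+1+1) = g q.1 (q.2 x.succ) := fun x => by
    have := hsucc x.succ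
    rw [Fin.val_succ] at this
    push_cast at this
    exact this
  have h4 : ∀ x : Fin m, sval (Phi b q) (((x:ℕ):ℤ)+1+1) = g q.1 (q.2 x.castSucc) := fun x => by
    have := hsucc x.castSucc
    rwa [Fin.coe_castSucc] at this
  have hbd := abs_le.mp (abs_g_le q.1 (q.2 0))
  rw [h0, h1, h2]
  simp only [h3, h4, (g_strictMono q.1).lt_iff_lt]
  cases b
  · rw [if_neg (by simp; omega), if_pos (by simp; omega)]
    omega
  · rw [if_pos (by simp; omega), if_neg (by simp; omega)]
    omega

lemma sSet_eq_image (δ : Fin (m+1) → Bool) (τ : Equiv.Perm (Fin (m+1))) :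
    univ.image (fun k => g δ (τ k)) = sSet δ := by
  apply Finset.eq_of_subset_of_card_le
  · intro x hx
    simp only [mem_image, mem_univ, true_and] at hx
    obtain ⟨k, rfl⟩ := hx
    exact g_mem δ (τ k)
  · rw [card_sSet, Finset.card_image_of_injective _
      (fun a b hab => τ.injective ((g_strictMono δ).injective hab)), card_univ, Fintype.card_fin]

lemma neg_mem_sSet (δ : Fin (m+1) → Bool) (v : Fin (m+1)) :
    (-(((v : ℕ) : ℤ) + 1) ∈ sSet δ) ↔ δ v = true := by
  constructor
  · intro h
    simp only [sSet, mem_image, mem_univ, true_and] at h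
    obtain ⟨u, hu⟩ := h
    have habs := congrArg abs hu
    rw [abs_rmap, abs_neg, abs_of_nonneg (by positivity)] at habs
    have huv : u = v := Fin.ext (by exact_mod_cast add_right_cancel habs)
    subst huv
    rw [← rmap_neg_iff δ u, hu]
    omega
  · intro h
    have : rmap δ v = -(((v : ℕ) : ℤ) + 1) := by rw [rmap, if_pos h]
    rw [← this]
    exact mem_image_of_mem _ (mem_univ v)

lemma Phi_injective (b : Bool) (q₁ q₂ : (Fin (m+1) → Bool) × Equiv.Perm (Fin (m+1)))
    (h : Phi b q₁ = Phi b q₂) : q₁ = q₂ := by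
  have hword : ∀ k : Fin (m+1), g q₁.1 (q₁.2 k) = g q₂.1 (q₂.2 k) := by
    intro k
    rw [← sval_Phi_succ b q₁ k, ← sval_Phi_succ b q₂ k, h]
  have hs : sSet q₁.1 = sSet q₂.1 := by
    rw [← sSet_eq_image q₁.1 q₁.2, ← sSet_eq_image q₂.1 q₂.2]
    exact Finset.image_congr (fun k _ => hword k)
  have hδ : q₁.1 = q₂.1 := by
    funext v
    have h1 := neg_mem_sSet q₁.1 v
    rw [hs] at h1
    have h2 := h1.symm.trans (neg_mem_sSet q₂.1 v)
    cases hb1 : q₁.1 v <;> cases hb2 : q₂.1 v <;> simp_all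
  have hτ : q₁.2 = q₂.2 := by
    apply Equiv.ext
    intro k
    apply (g_strictMono q₁.1).injective
    rw [hword k, hδ]
  exact Prod.ext hδ hτ
lemma Phi_surjective (b : Bool) (p : Equiv.Perm (Fin (m+2)) × (Fin (m+2) → Bool))
    (hp : sval p 1 = (if b then -((m:ℤ)+2) else (m:ℤ)+2)) : ∃ q, Phi b q = p := by
  classical
  have h1 := sval_coe p 0
  simp only [Fin.val_zero, Nat.cast_zero, zero_add] at h1
  rw [h1] at hp
  have hσb := (p.1 0).isLt
  have hσ0 : p.1 0 = Fin.last (m+1) := by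
    apply Fin.ext
    rw [Fin.val_last]
    rcases hb : p.2 0 <;> rw [hb] at hp <;> cases b <;> norm_num at hp <;> omega
  have hε0 : p.2 0 = b := by
    rcases hb : p.2 0 <;> rw [hb] at hp <;> cases b <;> norm_num at hp <;>
      first | rfl | omega
  have hne : ∀ k : Fin (m+1), p.1 k.succ ≠ Fin.last (m+1) := by
    intro k h
    exact (Fin.succ_ne_zero k) (p.1.injective (h.trans hσ0.symm))
  set δ : Fin (m+1) → Bool := fun u => p.2 (p.1.symm u.castSucc) with hδdef
  have hδk : ∀ k : Fin (m+1), δ ((p.1 k.succ).castPred (hne k)) = p.2 k.succ := by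
    intro k
    show p.2 (p.1.symm ((p.1 k.succ).castPred (hne k)).castSucc) = p.2 k.succ
    rw [Fin.castSucc_castPred, Equiv.symm_apply_apply]
  have hW : ∀ k : Fin (m+1),
      sval p (((k:ℕ):ℤ)+2) = rmap δ ((p.1 k.succ).castPred (hne k)) := by
    intro k
    have h2 := sval_coe p k.succ
    rw [Fin.val_succ] at h2
    push_cast at h2
    rw [show ((k:ℕ):ℤ)+2 = ((k:ℕ):ℤ)+1+1 by ring, h2, rmap, hδk k]
    rcases hb : p.2 k.succ <;> simp [Fin.coe_castPred]
  have hmem : ∀ k : Fin (m+1), sval p (((k:ℕ):ℤ)+2) ∈ sSet δ := by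
    intro k
    rw [hW k]
    exact mem_image_of_mem _ (mem_univ _)
  set t : Fin (m+1) → Fin (m+1) :=
    fun k => (gIso δ).symm ⟨sval p (((k:ℕ):ℤ)+2), hmem k⟩ with htdef
  have hgt : ∀ k, g δ (t k) = sval p (((k:ℕ):ℤ)+2) := by
    intro k
    show ((gIso δ ((gIso δ).symm ⟨sval p (((k:ℕ):ℤ)+2), hmem k⟩) : {x // x ∈ sSet δ}) : ℤ) = _
    rw [OrderIso.apply_symm_apply]
  have tinj : Function.Injective t := by
    intro a c hac
    have h3 : sval p (((a:ℕ):ℤ)+2) = sval p (((c:ℕ):ℤ)+2) := by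
      rw [← hgt a, ← hgt c, hac]
    rw [hW a, hW c] at h3
    have h4 := rmap_injective δ h3
    have h5 := congrArg Fin.castSucc h4
    rw [Fin.castSucc_castPred, Fin.castSucc_castPred] at h5
    exact Fin.succ_injective _ (p.1.injective h5)
  set τ : Equiv.Perm (Fin (m+1)) :=
    Equiv.ofBijective t (Finite.injective_iff_bijective.mp tinj) with hτdef
  have hτ : ∀ k, τ k = t k := fun k => rfl
  have hval : ∀ k, valEquiv δ (τ k) = (p.1 k.succ).castPred (hne k) := by
    intro k
    rw [hτ k]
    show (rEquiv δ).symm ((gIso δ).toEquiv ((gIso δ).symm ⟨sval p (((k:ℕ):ℤ)+2), hmem k⟩)) = _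
    rw [show (gIso δ).toEquiv ((gIso δ).symm ⟨sval p (((k:ℕ):ℤ)+2), hmem k⟩)
        = ⟨sval p (((k:ℕ):ℤ)+2), hmem k⟩ from (gIso δ).apply_symm_apply _]
    rw [Equiv.symm_apply_eq]
    apply Subtype.ext
    show sval p (((k:ℕ):ℤ)+2) = (((rEquiv δ) ((p.1 k.succ).castPred (hne k)) : {x // x ∈ sSet δ}) : ℤ)
    rw [show (((rEquiv δ) ((p.1 k.succ).castPred (hne k)) : {x // x ∈ sSet δ}) : ℤ)
        = rmap δ ((p.1 k.succ).castPred (hne k)) from rfl]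
    exact hW k
  refine ⟨(δ, τ), Prod.ext ?_ ?_⟩
  · apply Equiv.ext
    intro i
    induction i using Fin.cases with
    | zero =>
      show embed (τ.trans (valEquiv δ)) 0 = p.1 0
      rw [embed_zero, hσ0]
    | succ k =>
      show embed (τ.trans (valEquiv δ)) k.succ = p.1 k.succ
      rw [embed_succ]
      show (valEquiv δ (τ k)).castSucc = p.1 k.succ
      rw [hval k, Fin.castSucc_castPred]
  · funext i
    induction i using Fin.cases with
    | zero =>
      show (Fin.cons b (fun k => decide (g δ (τ k) < 0)) : Fin (m+2) → Bool) 0 = p.2 0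
      rw [Fin.cons_zero, hε0]
    | succ k =>
      show (Fin.cons b (fun k => decide (g δ (τ k) < 0)) : Fin (m+2) → Bool) k.succ = p.2 k.succ
      rw [Fin.cons_succ]
      have hneg : (g δ (τ k) < 0) ↔ (p.2 k.succ = true) := by
        rw [hτ k, hgt k, hW k, rmap_neg_iff, hδk k]
      rcases hb : p.2 k.succ <;> simp [hneg, hb]
lemma master (b : Bool) :
    Bpoly (m+2) (if b then -((m:ℤ)+2) else ((m:ℤ)+2)) =
      ∑ q : (Fin (m+1) → Bool) × Equiv.Perm (Fin (m+1)), X ^ (desNum q.2 + 1) := by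
  rw [Bpoly]
  refine (Finset.sum_bij (fun q (_ : q ∈ univ) => Phi b q) ?_ ?_ ?_ ?_).symm
  · intro q _
    simp only [mem_filter, mem_univ, true_and]
    exact sval_Phi_one b q
  · intro q1 _ q2 _ h
    exact Phi_injective b q1 q2 h
  · intro p hp
    simp only [mem_filter, mem_univ, true_and] at hp
    obtain ⟨q, hq⟩ := Phi_surjective b p hp
    exact ⟨q, mem_univ q, hq⟩
  · intro q _
    rw [desB_Phi]

lemma sum_eq :
    (∑ q : (Fin (m+1) → Bool) × Equiv.Perm (Fin (m+1)),
        (Polynomial.X : Polynomial ℚ) ^ (desNum q.2 + 1)) =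
      (2 : Polynomial ℚ) ^ (m+1) * Polynomial.X * eulerianPoly (m+1) := by
  rw [Fintype.sum_prod_type]
  show (∑ _x : Fin (m+1) → Bool, ∑ y : Equiv.Perm (Fin (m+1)),
      (Polynomial.X : Polynomial ℚ) ^ (desNum y + 1)) = _
  rw [Finset.sum_const, card_univ]
  have hc : Fintype.card (Fin (m+1) → Bool) = 2^(m+1) := by
    simp [Fintype.card_fun]
  rw [hc, nsmul_eq_mul]
  push_cast
  rw [eulerianPoly]
  simp only [pow_succ]
  rw [← Finset.sum_mul]
  ring

/-- For `n ≥ 2`: `B_{n,n}(t) = B_{n,-n}(t) = 2^{n-1} · t · A_{n-1}(t)`. -/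
theorem stmt14 (n : ℕ) (hn : 2 ≤ n) :
    Bpoly n (n : ℤ) = Bpoly n (-(n : ℤ)) ∧
    Bpoly n (n : ℤ) = (2 : Polynomial ℚ) ^ (n - 1) * Polynomial.X * eulerianPoly (n - 1) := by
  obtain ⟨m, rfl⟩ : ∃ m, n = m + 2 := ⟨n - 2, by omega⟩
  have hT := master (m := m) true
  have hF := master (m := m) false
  simp only [Bool.false_eq_true, if_true, if_false] at hT hF
  have hcast : ((m + 2 : ℕ) : ℤ) = (m : ℤ) + 2 := by push_cast; ring
  have hm1 : m + 2 - 1 = m + 1 := rfl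
  constructor
  · rw [hcast, hF, hT]
  · rw [hcast, hF, hm1, sum_eq]
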